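/- Let θ : ℕ → ℝ be positive and nondecreasing with n²/θ_n → c as n → ∞ for some constant c > 0 (Case C2). For each n, let (C_1^n,…,C_n^n) be distributed according to the Ewens sampling formula with parameters n and θ_n. Then P(∑_{j=3}^n C_j^n = 0) → 1, and for every nonnegative integer k, P(C_1^n = n−2k and C_2^n = k) → e^{−c/2}·(c/2)^k/k! as n → ∞; consequently (C_1^n − n, C_2^n) converges in distribution to (−2P_{c/2}, P_{c/2}), where P_{c/2} is Poisson with mean c/2. -/

import Mathlib

open MeasureTheory Filter
open Finset Topology Function Asymptotics
open scoped Nat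

/-!
The Ewens weight of the cycle type with `k` transpositions and `n - 2k` fixed points factors as
`∏_{i<n} θ/(θ+i) · n(n-1)⋯(n-2k+1)/θ^k · 1/(2^k k!)`. Since `∑_{i<n} log(1 + i/θ) ≈ n²/(2θ) → c/2`,
the product tends to `e^{-c/2}`, and the middle factor tends to `c^k`; so these events have
Poisson(`c/2`) limits. As the Poisson masses add up to `1`, no probability is left in the limit for
any other cycle type: squeezing an event between finite unions of these disjoint events gives both
limits.
-/

theorem HasSum.exists_finset_subset_lt_sum {β : Type*} {f : β → ℝ} {S : Set β} {L a : ℝ}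
    (hL : HasSum (S.indicator f) L) (ha : a < L) :
    ∃ s : Finset β, ↑s ⊆ S ∧ a < ∑ k ∈ s, f k := by
  classical
  obtain ⟨t, ht⟩ := (hL.eventually (lt_mem_nhds ha)).exists
  refine ⟨t.filter (· ∈ S), fun k hk => (mem_filter.1 hk).2, ?_⟩
  simpa only [sum_filter, Set.indicator_apply] using ht

theorem tendsto_of_sum_le_of_add_sum_le_one {p : ℕ → ℕ → ℝ} {π x : ℕ → ℝ} {S : Set ℕ} {L : ℝ}
    (hπ : HasSum π 1) (hL : HasSum (S.indicator π) L)
    (hp : ∀ k, Tendsto (p · k) atTop (𝓝 (π k)))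
    (hlow : ∀ᶠ n in atTop, ∀ t : Finset ℕ, ↑t ⊆ S → ∑ k ∈ t, p n k ≤ x n)
    (hup : ∀ᶠ n in atTop, ∀ t : Finset ℕ, Disjoint (t : Set ℕ) S → x n + ∑ k ∈ t, p n k ≤ 1) :
    Tendsto x atTop (𝓝 L) := by
  have hsum (t : Finset ℕ) : Tendsto (fun n => ∑ k ∈ t, p n k) atTop (𝓝 (∑ k ∈ t, π k)) :=
    tendsto_finsetSum t fun k _ => hp k
  refine tendsto_order.2 ⟨fun a ha => ?_, fun b hb => ?_⟩
  · obtain ⟨t, htS, hat⟩ := hL.exists_finset_subset_lt_sum ha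
    filter_upwards [hlow, (hsum t).eventually (lt_mem_nhds hat)] with n hn hlt
    exact hlt.trans_le (hn t htS)
  · have hcompl : HasSum (Sᶜ.indicator π) (1 - L) := by
      rw [Set.indicator_compl]
      exact hπ.sub hL
    obtain ⟨t, htS, hbt⟩ := hcompl.exists_finset_subset_lt_sum (sub_lt_sub_left hb 1)
    filter_upwards [hup, (hsum t).eventually (lt_mem_nhds hbt)] with n hn hlt
    linarith [hn t (Set.subset_compl_iff_disjoint_right.1 htS)]

section
variable {Ω ι : Type*} [MeasurableSpace Ω] {μ : Measure Ω} {A : ι → Set Ω} {D : Set Ω}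
  {t : Finset ι}

theorem sum_measureReal_le_of_forall_subset [IsFiniteMeasure μ] (hA : ∀ k, MeasurableSet (A k))
    (hdisj : Pairwise (Disjoint on A)) (ht : ∀ k ∈ t, A k ⊆ D) :
    ∑ k ∈ t, μ.real (A k) ≤ μ.real D := by
  rw [← measureReal_biUnion_finset (hdisj.set_pairwise _) fun k _ => hA k]
  exact measureReal_mono (Set.iUnion₂_subset ht)

theorem measureReal_add_sum_le_one [IsProbabilityMeasure μ] (hA : ∀ k, MeasurableSet (A k))
    (hdisj : Pairwise (Disjoint on A)) (ht : ∀ k ∈ t, Disjoint D (A k)) :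
    μ.real D + ∑ k ∈ t, μ.real (A k) ≤ 1 := by
  rw [← measureReal_biUnion_finset (hdisj.set_pairwise _) fun k _ => hA k,
    ← measureReal_union (Set.disjoint_iUnion₂_right.2 ht) (t.measurableSet_biUnion fun k _ => hA k)
      (measure_ne_top _ _) (measure_ne_top _ _)]
  exact measureReal_le_one
end

theorem tendsto_measureReal_of_tendsto_of_pairwise_disjoint {Ω : ℕ → Type*}
    [∀ n, MeasurableSpace (Ω n)] {μ : ∀ n, Measure (Ω n)} [∀ n, IsProbabilityMeasure (μ n)]
    {A : ∀ n, ℕ → Set (Ω n)} {π : ℕ → ℝ} (hA : ∀ n k, MeasurableSet (A n k))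
    (hdisj : ∀ᶠ n in atTop, Pairwise (Disjoint on A n)) (hπ : HasSum π 1)
    (hlim : ∀ k, Tendsto (fun n => (μ n).real (A n k)) atTop (𝓝 (π k)))
    {S : Set ℕ} {L : ℝ} (hL : HasSum (S.indicator π) L) {D : ∀ n, Set (Ω n)}
    (hsub : ∀ᶠ n in atTop, ∀ k ∈ S, A n k ⊆ D n)
    (hdisjD : ∀ᶠ n in atTop, ∀ k ∉ S, Disjoint (D n) (A n k)) :
    Tendsto (fun n => (μ n).real (D n)) atTop (𝓝 L) := by
  refine tendsto_of_sum_le_of_add_sum_le_one hπ hL hlim ?_ ?_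
  · filter_upwards [hdisj, hsub] with n hn hsub t htS
    exact sum_measureReal_le_of_forall_subset (hA n) hn fun k hk => hsub k (htS hk)
  · filter_upwards [hdisj, hdisjD] with n hn hdisjD t ht
    exact measureReal_add_sum_le_one (hA n) hn fun k hk => hdisjD k (ht.subset_compl_right hk)

section
variable {θ : ℕ → ℝ} {c : ℝ}

theorem tendsto_natCast_div_of_tendsto_sq_div
    (hθ : Tendsto (fun n : ℕ => (n : ℝ) ^ 2 / θ n) atTop (𝓝 c)) :
    Tendsto (fun n : ℕ => (n : ℝ) / θ n) atTop (𝓝 0) := by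
  have h := hθ.mul tendsto_one_div_atTop_nhds_zero_nat
  rw [mul_zero] at h
  refine h.congr' ?_
  filter_upwards [eventually_ne_atTop 0] with n hn
  field_simp

theorem tendsto_sum_range_div_of_tendsto_sq_div
    (hθ : Tendsto (fun n : ℕ => (n : ℝ) ^ 2 / θ n) atTop (𝓝 c)) :
    Tendsto (fun n : ℕ => ∑ i ∈ range n, (i : ℝ) / θ n) atTop (𝓝 (c / 2)) := by
  have gauss (n : ℕ) : ∑ i ∈ range n, (i : ℝ) = ((n : ℝ) ^ 2 - n) / 2 := by
    induction n with
    | zero => simp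
    | succ m ih => rw [sum_range_succ, ih]; push_cast; ring
  have h := (hθ.sub (tendsto_natCast_div_of_tendsto_sq_div hθ)).div_const 2
  rw [sub_zero] at h
  refine h.congr fun n => ?_
  rw [← sum_div, gauss]
  ring

theorem Real.sub_sq_le_log_one_add {x : ℝ} (hx : 0 ≤ x) : x - x ^ 2 ≤ Real.log (1 + x) := by
  refine le_trans ?_ (Real.le_log_one_add_of_nonneg hx)
  rw [le_div_iff₀ (by linarith)]
  nlinarith [pow_nonneg hx 3]

theorem tendsto_sum_range_log_one_add_div_of_tendsto_sq_div (hpos : ∀ n, 0 < θ n)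
    (hθ : Tendsto (fun n : ℕ => (n : ℝ) ^ 2 / θ n) atTop (𝓝 c)) :
    Tendsto (fun n : ℕ => ∑ i ∈ range n, Real.log (1 + i / θ n)) atTop (𝓝 (c / 2)) := by
  have hsum := tendsto_sum_range_div_of_tendsto_sq_div hθ
  have hlower : Tendsto (fun n : ℕ => (1 - n / θ n) * ∑ i ∈ range n, (i : ℝ) / θ n) atTop
      (𝓝 (c / 2)) := by
    simpa using ((tendsto_natCast_div_of_tendsto_sq_div hθ).const_sub 1).mul hsum
  refine tendsto_of_tendsto_of_tendsto_of_le_of_le hlower hsum (fun n => ?_) fun n => ?_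
  · rw [mul_sum]
    refine sum_le_sum fun i hi => ?_
    have hx : 0 ≤ (i : ℝ) / θ n := div_nonneg i.cast_nonneg (hpos n).le
    have hsq : ((i : ℝ) / θ n) ^ 2 ≤ n / θ n * (i / θ n) := by
      rw [sq]
      gcongr
      · exact (hpos n).le
      · exact_mod_cast (mem_range.1 hi).le
    linarith [Real.sub_sq_le_log_one_add hx]
  · refine sum_le_sum fun i _ => ?_
    have := Real.log_le_sub_one_of_pos (by have := hpos n; positivity : 0 < 1 + (i : ℝ) / θ n)
    linarith

theorem tendsto_prod_range_div_add_of_tendsto_sq_div (hpos : ∀ n, 0 < θ n)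
    (hθ : Tendsto (fun n : ℕ => (n : ℝ) ^ 2 / θ n) atTop (𝓝 c)) :
    Tendsto (fun n : ℕ => ∏ i ∈ range n, θ n / (θ n + i)) atTop (𝓝 (Real.exp (-(c / 2)))) := by
  refine ((Real.continuous_exp.tendsto _).comp
    (tendsto_sum_range_log_one_add_div_of_tendsto_sq_div hpos hθ).neg).congr fun n => ?_
  rw [comp_apply, ← sum_neg_distrib, Real.exp_sum]
  refine prod_congr rfl fun i _ => ?_
  have := hpos n
  rw [Real.exp_neg, Real.exp_log (by positivity), one_add_div this.ne', inv_div]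

theorem tendsto_descFactorial_div_pow_of_tendsto_sq_div
    (hθ : Tendsto (fun n : ℕ => (n : ℝ) ^ 2 / θ n) atTop (𝓝 c)) (k : ℕ) :
    Tendsto (fun n : ℕ => (n.descFactorial (2 * k) : ℝ) / θ n ^ k) atTop (𝓝 (c ^ k)) := by
  have hz : ∀ᶠ n : ℕ in atTop, ((n : ℝ) ^ (2 * k)) ≠ 0 := by
    filter_upwards [eventually_ne_atTop 0] with n hn
    positivity
  have h := ((isEquivalent_iff_tendsto_one hz).1 (isEquivalent_descFactorial (2 * k))).mul
    (hθ.pow k)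
  rw [one_mul] at h
  refine h.congr' ?_
  filter_upwards [hz] with n hn
  simp only [Pi.div_apply]
  rw [div_pow, ← pow_mul, div_mul_div_comm, mul_comm _ (θ n ^ k), mul_div_mul_right _ _ hn]
end

noncomputable def ewensWeight (n : ℕ) (θ : ℝ) (a : ℕ → ℕ) : ℝ :=
  (n ! : ℝ) / (∏ i ∈ range n, (θ + i)) * ∏ j ∈ Icc 1 n, (θ / j) ^ (a j) / (a j)!

theorem ewensWeight_nonneg {n : ℕ} {θ : ℝ} (hθ : 0 ≤ θ) (a : ℕ → ℕ) : 0 ≤ ewensWeight n θ a := by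
  unfold ewensWeight
  positivity

def involutionCycleCounts (n k j : ℕ) : ℕ :=
  if j = 1 then n - 2 * k else if j = 2 then k else 0

section
variable {n k : ℕ}

@[to_additive]
theorem prod_Icc_involutionCycleCounts {M : Type*} [CommMonoid M] (f : ℕ → ℕ → M)
    (hf : ∀ j, f j 0 = 1) (hn : 2 ≤ n) :
    ∏ j ∈ Icc 1 n, f j (involutionCycleCounts n k j) = f 1 (n - 2 * k) * f 2 k := by
  rw [← prod_subset (s₁ := {1, 2}) (fun j hj => by simp at hj; simp; omega)
    fun j _ hj => by simp_all [involutionCycleCounts], prod_pair (by decide : (1 : ℕ) ≠ 2)]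
  simp [involutionCycleCounts]

theorem eq_involutionCycleCounts_iff (hn : 2 ≤ n) (b : ℕ → ℕ) :
    (∀ j ∈ Icc 1 n, b j = involutionCycleCounts n k j) ↔
      b 1 = n - 2 * k ∧ b 2 = k ∧ ∑ j ∈ Icc 3 n, b j = 0 := by
  simp only [sum_eq_zero_iff, mem_Icc]
  constructor
  · intro h
    refine ⟨h 1 (by omega), h 2 (by omega), fun j hj => ?_⟩
    rw [h j (by omega), involutionCycleCounts, if_neg (by omega), if_neg (by omega)]
  · rintro ⟨h1, h2, h3⟩ j hj
    unfold involutionCycleCounts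
    split_ifs with hj1 hj2
    · rwa [hj1]
    · rwa [hj2]
    · exact h3 j (by omega)

theorem ewensWeight_involutionCycleCounts {θ : ℝ} (hθ : 0 < θ) (hn : 2 ≤ n) (hk : 2 * k ≤ n) :
    ewensWeight n θ (involutionCycleCounts n k) =
      (∏ i ∈ range n, θ / (θ + i)) * (n.descFactorial (2 * k) / θ ^ k) / (2 ^ k * k !) := by
  have hfac : ((n - 2 * k)! : ℝ) * n.descFactorial (2 * k) = n ! := by
    exact_mod_cast Nat.factorial_mul_descFactorial hk
  have hpow : θ ^ n = θ ^ (n - 2 * k) * θ ^ k * θ ^ k := by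
    rw [mul_assoc, ← pow_add, ← pow_add, ← two_mul, Nat.sub_add_cancel hk]
  rw [ewensWeight, prod_Icc_involutionCycleCounts (fun j m => (θ / j) ^ m / (m ! : ℝ)) (by simp) hn,
    prod_div_distrib, prod_const, card_range, ← hfac, hpow]
  simp only [Nat.cast_one, div_one, Nat.cast_ofNat, div_pow]
  field_simp
end

theorem tendsto_ewensWeight_involutionCycleCounts {θ : ℕ → ℝ} {c : ℝ} (hpos : ∀ n, 0 < θ n)
    (hθ : Tendsto (fun n : ℕ => (n : ℝ) ^ 2 / θ n) atTop (𝓝 c)) (k : ℕ) :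
    Tendsto (fun n => ewensWeight n (θ n) (involutionCycleCounts n k)) atTop
      (𝓝 (Real.exp (-(c / 2)) * (c / 2) ^ k / k !)) := by
  have h := ((tendsto_prod_range_div_add_of_tendsto_sq_div hpos hθ).mul
    (tendsto_descFactorial_div_pow_of_tendsto_sq_div hθ k)).div_const (2 ^ k * k !)
  rw [mul_div_assoc, ← div_div, ← div_pow, ← mul_div_assoc] at h
  refine h.congr' ?_
  filter_upwards [eventually_ge_atTop (2 * k + 2)] with n hn
  rw [ewensWeight_involutionCycleCounts (hpos n) (by omega) (by omega)]

theorem stmt_17_general (θ : ℕ → ℝ) (hpos : ∀ n, 0 < θ n)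
    (c : ℝ) (hc : 0 < c)
    (hC2 : Tendsto (fun n : ℕ => (n : ℝ) ^ 2 / θ n) atTop (nhds c))
    (Ω : ℕ → Type*) [∀ n, MeasurableSpace (Ω n)]
    (P : ∀ n, Measure (Ω n)) [∀ n, IsProbabilityMeasure (P n)]
    (C : ∀ n, ℕ → Ω n → ℕ)
    (hmeas : ∀ n j, Measurable (C n j))
    (hlaw : ∀ n, 1 ≤ n → ∀ a : ℕ → ℕ,
      (P n) {ω | ∀ j ∈ Finset.Icc 1 n, C n j ω = a j} =
        ENNReal.ofReal
          (if ∑ j ∈ Finset.Icc 1 n, j * a j = n then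
            (Nat.factorial n : ℝ) / (∏ i ∈ Finset.range n, (θ n + i)) *
              ∏ j ∈ Finset.Icc 1 n, (θ n / j) ^ (a j) / (Nat.factorial (a j))
          else 0)) :
    Tendsto (fun n : ℕ =>
        ((P n) {ω | ∑ j ∈ Finset.Icc 3 n, C n j ω = 0}).toReal) atTop (nhds 1) ∧
    ∀ k : ℕ, Tendsto (fun n : ℕ =>
        ((P n) {ω | C n 1 ω = n - 2 * k ∧ C n 2 ω = k}).toReal) atTop
      (nhds (Real.exp (-c / 2) * (c / 2) ^ k / (Nat.factorial k))) := by
  let A n k : Set (Ω n) := {ω | ∀ j ∈ Icc 1 n, C n j ω = involutionCycleCounts n k j}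
  have hA_iff : ∀ᶠ n in atTop, ∀ k ω,
      ω ∈ A n k ↔ C n 1 ω = n - 2 * k ∧ C n 2 ω = k ∧ ∑ j ∈ Icc 3 n, C n j ω = 0 :=
    eventually_atTop.2 ⟨2, fun n hn k ω => eq_involutionCycleCounts_iff hn (C n · ω)⟩
  have hA_meas n k : MeasurableSet (A n k) := by
    simp only [A, Set.ofPred_forall]
    exact (Icc 1 n).measurableSet_biInter fun j _ => hmeas n j (measurableSet_singleton _)
  have hA_disj : ∀ᶠ n in atTop, Pairwise (Disjoint on A n) := by
    filter_upwards [hA_iff] with n h k k' hkk'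
    exact Set.disjoint_left.2 fun ω h₁ h₂ =>
      hkk' (((h k ω).1 h₁).2.1.symm.trans ((h k' ω).1 h₂).2.1)
  have hA_lim k : Tendsto (fun n => (P n).real (A n k)) atTop
      (𝓝 (Real.exp (-(c / 2)) * (c / 2) ^ k / k !)) := by
    refine (tendsto_ewensWeight_involutionCycleCounts hpos hC2 k).congr' ?_
    filter_upwards [eventually_ge_atTop (2 * k + 2)] with n hn
    have hsum : ∑ j ∈ Icc 1 n, j * involutionCycleCounts n k j = n := by
      rw [sum_Icc_involutionCycleCounts (fun j m => j * m) (by simp) (by omega)]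
      omega
    rw [measureReal_def, hlaw n (by omega), if_pos hsum]
    exact (ENNReal.toReal_ofReal (ewensWeight_nonneg (hpos n).le _)).symm
  have hπ := ProbabilityTheory.hasSum_one_poissonMeasure ⟨c / 2, by positivity⟩
  refine ⟨tendsto_measureReal_of_tendsto_of_pairwise_disjoint hA_meas hA_disj hπ hA_lim
    (S := Set.univ) (by simpa using hπ) ?_ (by simp), fun k => ?_⟩
  · filter_upwards [hA_iff] with n h k _ ω hω using ((h k ω).1 hω).2.2
  rw [neg_div]
  refine tendsto_measureReal_of_tendsto_of_pairwise_disjoint hA_meas hA_disj hπ hA_lim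
    (S := {k}) (by rw [Set.indicator_singleton]; exact hasSum_pi_single k _) ?_ ?_
  · filter_upwards [hA_iff] with n h _ rfl ω hω using ⟨((h _ ω).1 hω).1, ((h _ ω).1 hω).2.1⟩
  · filter_upwards [hA_iff] with n h k' hk'
    exact Set.disjoint_left.2 fun ω hω hω' => hk' (((h k' ω).1 hω').2.1.symm.trans hω.2)

theorem stmt_17 (θ : ℕ → ℝ) (hpos : ∀ n, 0 < θ n) (hmono : Monotone θ)
    (c : ℝ) (hc : 0 < c)
    (hC2 : Tendsto (fun n : ℕ => (n : ℝ) ^ 2 / θ n) atTop (nhds c))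
    (Ω : ℕ → Type*) [∀ n, MeasurableSpace (Ω n)]
    (P : ∀ n, Measure (Ω n)) [∀ n, IsProbabilityMeasure (P n)]
    (C : ∀ n, ℕ → Ω n → ℕ)
    (hmeas : ∀ n j, Measurable (C n j))
    (hlaw : ∀ n, 1 ≤ n → ∀ a : ℕ → ℕ,
      (P n) {ω | ∀ j ∈ Finset.Icc 1 n, C n j ω = a j} =
        ENNReal.ofReal
          (if ∑ j ∈ Finset.Icc 1 n, j * a j = n then
            (Nat.factorial n : ℝ) / (∏ i ∈ Finset.range n, (θ n + i)) *
              ∏ j ∈ Finset.Icc 1 n, (θ n / j) ^ (a j) / (Nat.factorial (a j))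
          else 0)) :
    Tendsto (fun n : ℕ =>
        ((P n) {ω | ∑ j ∈ Finset.Icc 3 n, C n j ω = 0}).toReal) atTop (nhds 1) ∧
    ∀ k : ℕ, Tendsto (fun n : ℕ =>
        ((P n) {ω | C n 1 ω = n - 2 * k ∧ C n 2 ω = k}).toReal) atTop
      (nhds (Real.exp (-c / 2) * (c / 2) ^ k / (Nat.factorial k))) :=
  stmt_17_general θ hpos c hc hC2 Ω P C hmeas hlaw
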